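/- arXiv:1603.05366 — 14 statements merged into one kernel-verified Lean document; each statement's English description precedes it below -/
import Mathlib

section
/- The collections {[U,r]⁻ : U open in X, r ∈ ℝ} and {[U,B]⁻ : U open in X, B compact in ℝ} generate the same topology on C(X,ℝ), where [U,r]⁻ = {f : f⁻¹({r}) ∩ U ≠ ∅} and [U,B]⁻ = {f : f⁻¹(B) ∩ U ≠ ∅}. -/
open Set TopologicalSpace Filter

/-- The open-point topology on `C(X, ℝ)`, generated by the sets
`[U, r]⁻ = {f | ∃ x ∈ U, f x = r}` for `U` open in `X` and `r : ℝ`. -/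
def openPointTop (X : Type*) [TopologicalSpace X] : TopologicalSpace C(X, ℝ) :=
  generateFrom {S | ∃ (U : Set X) (r : ℝ), IsOpen U ∧ S = {f : C(X, ℝ) | ∃ x ∈ U, f x = r}}

/-- The point-open topology (topology of pointwise convergence) on `C(X, ℝ)`. -/
def pointOpenTop (X : Type*) [TopologicalSpace X] : TopologicalSpace C(X, ℝ) :=
  generateFrom {S | ∃ (x : X) (V : Set ℝ), IsOpen V ∧ S = {f : C(X, ℝ) | f x ∈ V}}

/-- The bi-compact-open topology `kh`: the join (coarsest common refinement) of the
compact-open topology and the open-point topology.  In Mathlib's order on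
`TopologicalSpace` (where smaller = finer), this join is `⊓`. -/
def biCompactOpenTop (X : Type*) [TopologicalSpace X] : TopologicalSpace C(X, ℝ) :=
  ContinuousMap.compactOpen ⊓ openPointTop X

/-- The bi-point-open topology `ph`: the join of the point-open topology and the
open-point topology. -/
def biPointOpenTop (X : Type*) [TopologicalSpace X] : TopologicalSpace C(X, ℝ) :=
  pointOpenTop X ⊓ openPointTop X

/-- `lc X` is the set of points of `X` having a compact neighborhood. -/
def lcSet (X : Type*) [TopologicalSpace X] : Set X :=
  {x | ∃ K : Set X, IsCompact K ∧ K ∈ nhds x}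

/-- A set `A` is `Gδ`-dense if every nonempty `Gδ`-set meets it. -/
def GdeltaDense {X : Type*} [TopologicalSpace X] (A : Set X) : Prop :=
  ∀ G : Set X, IsGδ G → G.Nonempty → (G ∩ A).Nonempty

/-- A nonempty set `B` is an `R`-set if countably many continuous real functions
map it onto all of `ℝ`. -/
def IsRSet {X : Type*} [TopologicalSpace X] (B : Set X) : Prop :=
  B.Nonempty ∧ ∃ f : ℕ → C(X, ℝ), (⋃ n, (f n) '' B) = Set.univ

/-- `X` is `R`-separable if there is a countable collection of `R`-sets such that
every nonempty open set contains a member of the collection. -/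
def RSeparable (X : Type*) [TopologicalSpace X] : Prop :=
  ∃ S : ℕ → Set X, (∀ n, IsRSet (S n)) ∧
    ∀ U : Set X, IsOpen U → U.Nonempty → ∃ n, S n ⊆ U

/-- A topology is submetrizable if it is finer than some metrizable topology. -/
def Submetrizable (α : Type*) [t : TopologicalSpace α] : Prop :=
  ∃ t' : TopologicalSpace α, @MetrizableSpace α t' ∧ t ≤ t'

/-- `X` is hemicompact if there is a sequence of compact sets cofinal in the
compact subsets of `X`. -/
def Hemicompact (X : Type*) [TopologicalSpace X] : Prop :=
  ∃ K : ℕ → Set X, (∀ n, IsCompact (K n)) ∧ ∀ A : Set X, IsCompact A → ∃ n, A ⊆ K n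

/-- `X` is almost σ-compact if it has a dense σ-compact subset. -/
def AlmostSigmaCompact (X : Type*) [TopologicalSpace X] : Prop :=
  ∃ K : ℕ → Set X, (∀ n, IsCompact (K n)) ∧ Dense (⋃ n, K n)

theorem stmt0 {X : Type*} [TopologicalSpace X] [T2Space X] [CompletelyRegularSpace X] :
    generateFrom {S | ∃ (U : Set X) (r : ℝ), IsOpen U ∧
        S = {f : C(X, ℝ) | ∃ x ∈ U, f x = r}} =
    generateFrom {S | ∃ (U : Set X) (B : Set ℝ), IsOpen U ∧ IsCompact B ∧
        S = {f : C(X, ℝ) | ∃ x ∈ U, f x ∈ B}} := by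
  apply le_antisymm
  · apply le_generateFrom
    rintro S ⟨U, B, hU, hB, rfl⟩
    have h : {f : C(X, ℝ) | ∃ x ∈ U, f x ∈ B} =
        ⋃ r ∈ B, {f : C(X, ℝ) | ∃ x ∈ U, f x = r} := by
      ext f
      simp only [mem_setOf_eq, mem_iUnion]
      constructor
      · rintro ⟨x, hx, hfx⟩; exact ⟨f x, hfx, x, hx, rfl⟩
      · rintro ⟨r, hr, x, hx, hfx⟩; exact ⟨x, hx, hfx ▸ hr⟩
    rw [h]
    letI := generateFrom {S | ∃ (U : Set X) (r : ℝ), IsOpen U ∧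
        S = {f : C(X, ℝ) | ∃ x ∈ U, f x = r}}
    exact isOpen_biUnion fun r _ => GenerateOpen.basic _ ⟨U, r, hU, rfl⟩
  · apply generateFrom_anti
    rintro S ⟨U, r, hU, rfl⟩
    exact ⟨U, {r}, hU, isCompact_singleton, by simp⟩
end

section
/- If lc(X), the set of points of X having a compact neighborhood, is G_δ-dense in X (i.e., every nonempty G_δ subset of X meets lc(X)), then the open-point topology on C(X,ℝ) has a base consisting of finite intersections [U₁,r₁]⁻ ∩ … ∩ [Uₙ,rₙ]⁻ where each Uᵢ is open with compact closure and the closures of the Uᵢ are pairwise disjoint. -/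
open Set TopologicalSpace Filter

lemma isGdelta_fiber {X : Type*} [TopologicalSpace X] (f : C(X, ℝ)) (r : ℝ) :
    IsGδ (f ⁻¹' {r}) := by
  have h : f ⁻¹' {r} = ⋂ n : ℕ, f ⁻¹' (Metric.ball r (1 / (n + 1))) := by
    ext x
    simp only [Set.mem_preimage, Set.mem_singleton_iff, Set.mem_iInter, Metric.mem_ball]
    constructor
    · rintro rfl n
      rw [dist_self]
      positivity
    · intro h
      by_contra hne
      have hd : 0 < dist (f x) r := dist_pos.mpr hne
      obtain ⟨n, hn⟩ := exists_nat_one_div_lt hd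
      exact absurd (h n) (not_lt.mpr hn.le)
  rw [h]
  exact IsGδ.iInter_of_isOpen fun n => Metric.isOpen_ball.preimage f.continuous

theorem stmt2 {X : Type*} [TopologicalSpace X] [T2Space X] [CompletelyRegularSpace X] (hlc : GdeltaDense (lcSet X)) :
    @IsTopologicalBasis C(X, ℝ) (openPointTop X)
      {S | ∃ (n : ℕ) (U : Fin n → Set X) (r : Fin n → ℝ),
        (∀ i, IsOpen (U i)) ∧ (∀ i, IsCompact (closure (U i))) ∧
        (∀ i j, i ≠ j → closure (U i) ∩ closure (U j) = ∅) ∧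
        S = ⋂ i, {f : C(X, ℝ) | ∃ x ∈ U i, f x = r i}} := by
  letI τ : TopologicalSpace C(X, ℝ) := openPointTop X
  have hgen : τ = generateFrom
      {S | ∃ (U : Set X) (r : ℝ), IsOpen U ∧ S = {f : C(X, ℝ) | ∃ x ∈ U, f x = r}} := rfl
  apply isTopologicalBasis_of_isOpen_of_nhds
  · rintro S ⟨n, U, r, hUo, -, -, rfl⟩
    exact isOpen_iInter_of_finite fun i =>
      isOpen_generateFrom_of_mem ⟨U i, r i, hUo i, rfl⟩
  · intro f O hfO hO
    obtain ⟨V0, ⟨t, ⟨htf, hts⟩, rfl⟩, hfV, hVO⟩ :=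
      (isTopologicalBasis_of_subbasis hgen).exists_subset_of_mem_open hfO hO
    haveI := htf.to_subtype
    have h1 : ∀ s : t, ∃ (U : Set X) (ρ : ℝ),
        IsOpen U ∧ (s : Set C(X, ℝ)) = {g : C(X, ℝ) | ∃ x ∈ U, g x = ρ} := fun s => hts s.2
    choose U r hUo hUeq using h1
    have h2 : ∀ s : t, ∃ p, p ∈ U s ∧ f p = r s ∧ p ∈ lcSet X := by
      intro s
      have hfs : f ∈ (s : Set C(X, ℝ)) := hfV _ s.2
      rw [hUeq s] at hfs
      obtain ⟨x, hxU, hfx⟩ := hfs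
      have hG : IsGδ (U s ∩ f ⁻¹' {r s}) := ((hUo s).isGδ).inter (isGdelta_fiber f (r s))
      obtain ⟨p, ⟨hpU, hpr⟩, hplc⟩ := hlc _ hG ⟨x, hxU, hfx⟩
      exact ⟨p, hpU, hpr, hplc⟩
    choose y hyU hyr hylc using h2
    have hPfin : (Set.range y).Finite := Set.finite_range y
    obtain ⟨W, hW, hWdisj⟩ := hPfin.t2_separation
    have h3 : ∀ p, p ∈ Set.range y → ∃ V : Set X, IsOpen V ∧ p ∈ V ∧ IsCompact (closure V) ∧
        closure V ⊆ W p ∧ ∀ s : t, y s = p → closure V ⊆ U s := by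
      rintro p ⟨s₀, rfl⟩
      obtain ⟨K, hKc, hKn⟩ := hylc s₀
      have hOopen : IsOpen (W (y s₀) ∩ interior K ∩ ⋂ (s : t) (_ : y s = y s₀), U s) :=
        (((hW _).2).inter isOpen_interior).inter
          (isOpen_iInter_of_finite fun s => isOpen_iInter_of_finite fun _ => hUo s)
      have hpO : y s₀ ∈ W (y s₀) ∩ interior K ∩ ⋂ (s : t) (_ : y s = y s₀), U s :=
        ⟨⟨(hW _).1, mem_interior_iff_mem_nhds.mpr hKn⟩,
          mem_iInter₂.mpr fun s hs => hs ▸ hyU s⟩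
      obtain ⟨C, ⟨hCn, hCcl⟩, hCO⟩ :=
        (closed_nhds_basis (y s₀)).mem_iff.mp (hOopen.mem_nhds hpO)
      have hclC : closure (interior C) ⊆ C :=
        (closure_mono interior_subset).trans hCcl.closure_eq.subset
      have hclO : closure (interior C) ⊆
          W (y s₀) ∩ interior K ∩ ⋂ (s : t) (_ : y s = y s₀), U s := hclC.trans hCO
      refine ⟨interior C, isOpen_interior, mem_interior_iff_mem_nhds.mpr hCn, ?_, ?_, ?_⟩
      · exact hKc.of_isClosed_subset isClosed_closure
          (fun x hx => interior_subset (hclO hx).1.2)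
      · exact fun x hx => (hclO hx).1.1
      · intro s hs x hx
        exact mem_iInter₂.mp (hclO hx).2 s hs
    choose! V hVo hpV hVcpt hVW hVU using h3
    obtain ⟨m, e, he⟩ := hPfin.fin_embedding
    have hei : ∀ i, (e i : X) ∈ Set.range y := fun i => he ▸ Set.mem_range_self i
    refine ⟨⋂ i, {g : C(X, ℝ) | ∃ x ∈ V (e i), g x = f (e i)},
      ⟨m, fun i => V (e i), fun i => f (e i), fun i => hVo _ (hei i),
        fun i => hVcpt _ (hei i), ?_, rfl⟩, ?_, ?_⟩
    · intro i j hij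
      have hne : (e i : X) ≠ e j := fun h => hij (e.injective h)
      have hd : Disjoint (closure (V (e i))) (closure (V (e j))) :=
        (hWdisj (hei i) (hei j) hne).mono (hVW _ (hei i)) (hVW _ (hei j))
      exact Set.disjoint_iff_inter_eq_empty.mp hd
    · exact mem_iInter.mpr fun i => ⟨e i, hpV _ (hei i), rfl⟩
    · intro g hg
      apply hVO
      rw [Set.mem_sInter]
      intro s hs
      rw [show s = {g : C(X, ℝ) | ∃ x ∈ U ⟨s, hs⟩, g x = r ⟨s, hs⟩} from hUeq ⟨s, hs⟩]
      have hyP : y ⟨s, hs⟩ ∈ Set.range e := he.symm ▸ Set.mem_range_self _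
      obtain ⟨i, hi⟩ := hyP
      obtain ⟨x, hxV, hgx⟩ := mem_iInter.mp hg i
      refine ⟨x, ?_, ?_⟩
      · exact hVU (e i) (hei i) ⟨s, hs⟩ hi.symm (subset_closure hxV)
      · exact hgx.trans ((congrArg f hi).trans (hyr ⟨s, hs⟩))
end

section
/- For a Tychonoff space X, if the bi-compact-open topology space C_kh(X) is regular, then the set lc(X) of points of X possessing a compact neighborhood is G_δ-dense in X. -/
open Set TopologicalSpace Filter

/-!
Suppose a nonempty Gδ-set `G` misses `lc X`. Choose `f ≥ 0` vanishing at a point of `G` with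
zero set inside `G`. The functions with a zero form a `kh`-open set containing `f`, so by
regularity it contains the closure of a basic neighbourhood `W ∩ ⋂ [Uᵢ, rᵢ]⁻` of `f`. For small
`η > 0` the function `f ⊔ η` has no zero, yet lies in that closure: it attains every `rᵢ > 0` at
the same point as `f`, while the conditions with `rᵢ = 0` have their witness in `G`, so `Uᵢ`
contains a point without compact neighbourhood. Near such a point a function can be given any
value without changing it on a prescribed compact set, hence the conditions of any further
neighbourhood can be met as well.
-/

open Topology

section

variable {X : Type*} [TopologicalSpace X]

/-- The basic open set `⋂_{(U, r) ∈ C} [U, r]⁻` of the open-point topology. -/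
def attainsAll (C : Finset (Set X × ℝ)) : Set C(X, ℝ) :=
  {f | ∀ c ∈ C, ∃ x ∈ c.1, f x = c.2}

lemma exists_isCompact_setOf_eqOn_subset {Y : Type*} [TopologicalSpace Y] {g : C(X, Y)}
    {W : Set C(X, Y)} (hW : W ∈ 𝓝 g) :
    ∃ P, IsCompact P ∧ {h : C(X, Y) | EqOn h g P} ⊆ W := by
  have hbasis : (⨅ P ∈ {P : Set X | IsCompact P}, 𝓟 {h : C(X, Y) | EqOn h g P}).HasBasis
      (· ∈ {P : Set X | IsCompact P}) fun P => {h : C(X, Y) | EqOn h g P} :=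
    hasBasis_biInf_principal
      (fun K hK K' hK' => ⟨K ∪ K', hK.union hK', fun _ h => h.mono subset_union_left,
        fun _ h => h.mono subset_union_right⟩) ⟨∅, isCompact_empty⟩
  have hle : (⨅ P ∈ {P : Set X | IsCompact P}, 𝓟 {h : C(X, Y) | EqOn h g P}) ≤ 𝓝 g := by
    rw [ContinuousMap.nhds_compactOpen]
    refine le_iInf₂ fun K hK => le_iInf₂ fun U _ => le_iInf fun hgKU => ?_
    exact iInf₂_le_of_le K hK (principal_mono.2 fun h hh => hgKU.congr hh.symm)
  exact hbasis.mem_iff.1 (hle hW)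

lemma exists_attainsAll_subset_of_mem_nhds {g : C(X, ℝ)} {t : Set C(X, ℝ)}
    (ht : t ∈ @nhds _ (openPointTop X) g) :
    ∃ C : Finset (Set X × ℝ), (∀ c ∈ C, IsOpen c.1 ∧ ∃ x ∈ c.1, g x = c.2) ∧
      attainsAll C ⊆ t := by
  classical
  obtain ⟨_, ⟨F, ⟨hF, hFsub⟩, rfl⟩, hgF, hFt⟩ :=
    (@IsTopologicalBasis.mem_nhds_iff _ (openPointTop X) _ _ _
      (@isTopologicalBasis_of_subbasis _ (openPointTop X) _ rfl)).1 ht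
  choose! U r hU hUr using fun s (hs : s ∈ F) => hFsub hs
  refine ⟨hF.toFinset.image fun s => (U s, r s), ?_, fun h hh => hFt fun s hs => ?_⟩
  · simp only [Finset.mem_image, Finite.mem_toFinset]
    rintro _ ⟨s, hs, rfl⟩
    have hgs := hgF s hs
    rw [hUr s hs] at hgs
    exact ⟨hU s hs, hgs⟩
  · rw [hUr s hs]
    exact hh _ (Finset.mem_image_of_mem _ (hF.mem_toFinset.2 hs))

lemma exists_mem_nhds_inter_attainsAll_subset {g : C(X, ℝ)} {t : Set C(X, ℝ)}
    (ht : t ∈ @nhds _ (biCompactOpenTop X) g) :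
    ∃ W ∈ 𝓝 g, ∃ C : Finset (Set X × ℝ), (∀ c ∈ C, IsOpen c.1 ∧ ∃ x ∈ c.1, g x = c.2) ∧
      W ∩ attainsAll C ⊆ t := by
  rw [biCompactOpenTop, nhds_inf, mem_inf_iff_superset] at ht
  obtain ⟨W, hW, t', ht', hsub⟩ := ht
  obtain ⟨C, hC, hCt'⟩ := exists_attainsAll_subset_of_mem_nhds ht'
  exact ⟨W, hW, C, hC, (inter_subset_inter_right W hCt').trans hsub⟩

section CompletelyRegular

variable [CompletelyRegularSpace X]

lemma exists_nonneg_zero_of_isGδ {G : Set X} (hG : IsGδ G) {p : X} (hp : p ∈ G) :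
    ∃ f : C(X, ℝ), (∀ x, 0 ≤ f x) ∧ f p = 0 ∧ ∀ x, f x = 0 → x ∈ G := by
  obtain ⟨u, hu, rfl⟩ := hG.eq_iInter_nat
  choose q hqc hqp hq1 using fun n => CompletelyRegularSpace.completely_regular p (u n)ᶜ
    (hu n).isClosed_compl (not_not.2 (mem_iInter.1 hp n))
  set a : ℕ → X → ℝ := fun n x => (1 / 2) ^ n * q n x
  have ha0 : ∀ n x, 0 ≤ a n x := fun n x => mul_nonneg (by positivity) (q n x).2.1
  have hale : ∀ n x, a n x ≤ (1 / 2) ^ n := fun n x =>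
    mul_le_of_le_one_right (by positivity) (q n x).2.2
  refine ⟨⟨fun x => ∑' n, a n x, continuous_tsum (fun n => by fun_prop) summable_geometric_two
    fun n x => by rw [Real.norm_of_nonneg (ha0 n x)]; exact hale n x⟩,
    fun x => tsum_nonneg (ha0 · x), by simp [a, hqp], fun x hx => mem_iInter.2 fun n => ?_⟩
  have han : a n x ≤ 0 := hx ▸ (summable_geometric_two.of_nonneg_of_le (ha0 · x) (hale · x)).le_tsum
    n fun j _ => ha0 j x
  by_contra hxn
  simp only [a, hq1 n hxn, Pi.one_apply, Set.Icc.coe_one, mul_one] at han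
  exact (pow_pos (by norm_num : (0 : ℝ) < 1 / 2) n).not_ge han

lemma exists_eqOn_apply_eq {P U : Set X} (hP : IsCompact P) (hU : IsOpen U)
    (hUlc : (U \ lcSet X).Nonempty) (g : C(X, ℝ)) (r : ℝ) :
    ∃ F : C(X, ℝ), EqOn F g P ∧ ∃ z ∈ U, F z = r := by
  obtain ⟨e, heU, he⟩ := hUlc
  obtain ⟨z, hzU, hzP⟩ : ∃ z ∈ U, z ∉ closure P := by
    by_contra! h
    exact he ⟨closure P, hP.closure, mem_of_superset (hU.mem_nhds heU) h⟩
  obtain ⟨β, hβc, hβz, hβP⟩ :=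
    CompletelyRegularSpace.completely_regular z _ isClosed_closure hzP
  refine ⟨g + (r - g z) • ⟨fun x => 1 - β x, by fun_prop⟩, fun x hx => ?_, z, hzU, ?_⟩
  · simp [hβP (subset_closure hx)]
  · simp [hβz]

/-- `Q` keeps the witnesses, so that they stay fixed while later conditions are handled. -/
lemma exists_eqOn_attains (C : Finset (Set X × ℝ)) {g : C(X, ℝ)} {P : Set X} (hP : IsCompact P)
    (hC : ∀ c ∈ C, IsOpen c.1 ∧ ((∃ x ∈ c.1, g x = c.2) ∨ (c.1 \ lcSet X).Nonempty)) :
    ∃ F : C(X, ℝ), EqOn F g P ∧ ∃ Q, IsCompact Q ∧ ∀ c ∈ C, ∃ x ∈ c.1 ∩ Q, F x = c.2 := by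
  classical
  induction C using Finset.induction_on generalizing P with
  | empty => exact ⟨g, eqOn_refl _ _, ∅, isCompact_empty, by simp⟩
  | insert c s _ ih =>
    rw [Finset.forall_mem_insert] at hC
    obtain ⟨⟨hcU, ⟨x, hxc, hgx⟩ | hclc⟩, hs⟩ := hC
    · obtain ⟨F, hFg, Q, hQ, hFs⟩ := ih (hP.insert x) hs
      refine ⟨F, hFg.mono (subset_insert x P), insert x Q, hQ.insert x,
        (Finset.forall_mem_insert _ _ _).2
          ⟨⟨x, ⟨hxc, mem_insert x Q⟩, (hFg (mem_insert x P)).trans hgx⟩, fun d hd => ?_⟩⟩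
      obtain ⟨y, ⟨hyd, hyQ⟩, hFy⟩ := hFs d hd
      exact ⟨y, ⟨hyd, mem_insert_of_mem x hyQ⟩, hFy⟩
    · obtain ⟨F₁, hF₁g, Q, hQ, hF₁s⟩ := ih hP hs
      obtain ⟨F, hFF₁, z, hzc, hFz⟩ := exists_eqOn_apply_eq (hP.union hQ) hcU hclc F₁ c.2
      refine ⟨F, (hFF₁.mono subset_union_left).trans hF₁g, insert z Q, hQ.insert z,
        (Finset.forall_mem_insert _ _ _).2 ⟨⟨z, ⟨hzc, mem_insert z Q⟩, hFz⟩, fun d hd => ?_⟩⟩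
      obtain ⟨y, ⟨hyd, hyQ⟩, hF₁y⟩ := hF₁s d hd
      exact ⟨y, ⟨hyd, mem_insert_of_mem z hyQ⟩, (hFF₁ (mem_union_right P hyQ)).trans hF₁y⟩

lemma mem_closure_inter_attainsAll {g : C(X, ℝ)} {V : Set C(X, ℝ)} (hV : V ∈ 𝓝 g)
    {C : Finset (Set X × ℝ)}
    (hC : ∀ c ∈ C, IsOpen c.1 ∧ ((∃ x ∈ c.1, g x = c.2) ∨ (c.1 \ lcSet X).Nonempty)) :
    g ∈ closure[biCompactOpenTop X] (V ∩ attainsAll C) := by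
  classical
  refine (@mem_closure_iff_nhds _ (biCompactOpenTop X) _ _).2 fun t ht => ?_
  obtain ⟨W, hW, C', hC', hWC't⟩ := exists_mem_nhds_inter_attainsAll_subset ht
  obtain ⟨P, hP, hPVW⟩ := exists_isCompact_setOf_eqOn_subset (inter_mem hV hW)
  have hCC' : ∀ c ∈ C ∪ C', IsOpen c.1 ∧ ((∃ x ∈ c.1, g x = c.2) ∨ (c.1 \ lcSet X).Nonempty) := by
    intro c hc
    rcases Finset.mem_union.1 hc with hc | hc
    · exact hC c hc
    · exact ⟨(hC' c hc).1, Or.inl (hC' c hc).2⟩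
  obtain ⟨F, hFg, _, _, hF⟩ := exists_eqOn_attains (C ∪ C') hP hCC'
  have hFC : F ∈ attainsAll (C ∪ C') := fun c hc =>
    let ⟨x, hx, hFx⟩ := hF c hc
    ⟨x, hx.1, hFx⟩
  exact ⟨F, hWC't ⟨(hPVW hFg).2, fun c hc => hFC c (Finset.mem_union_right _ hc)⟩,
    (hPVW hFg).1, fun c hc => hFC c (Finset.mem_union_left _ hc)⟩

end CompletelyRegular

lemma continuous_sup_const (f : C(X, ℝ)) :
    Continuous fun η : ℝ => f ⊔ ContinuousMap.const X η :=
  (ContinuousMap.curry ⟨fun q : ℝ × X => max (f q.2) q.1, by fun_prop⟩).continuous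

lemma exists_pos_sup_const_mem_nhds {f : C(X, ℝ)} (hf : ∀ x, 0 ≤ f x) {W : Set C(X, ℝ)}
    (hW : W ∈ 𝓝 f) {ι : Type*} (s : Finset ι) (r : ι → ℝ) :
    ∃ η > 0, W ∈ 𝓝 (f ⊔ ContinuousMap.const X η) ∧ ∀ i ∈ s, 0 < r i → η ≤ r i := by
  have hWη : ∀ᶠ η in 𝓝[>] 0, W ∈ 𝓝 (f ⊔ ContinuousMap.const X η) :=
    (((continuous_sup_const f).tendsto' 0 f (by ext x; simp [hf x])).eventually
      (eventually_mem_nhds_iff.2 hW)).filter_mono nhdsWithin_le_nhds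
  have hsη : ∀ᶠ η in 𝓝[>] 0, ∀ i ∈ s, 0 < r i → η ≤ r i :=
    (Finset.eventually_all s).2 fun i _ => by
      by_cases hi : 0 < r i
      · exact ((eventually_le_nhds hi).mono fun _ h _ => h).filter_mono nhdsWithin_le_nhds
      · exact .of_forall fun _ h => absurd h hi
  exact (eventually_mem_nhdsWithin.and (hWη.and hsη)).exists

end

theorem stmt4_general {X : Type*} [TopologicalSpace X] [CompletelyRegularSpace X]
    (hreg : @RegularSpace C(X, ℝ) (biCompactOpenTop X)) :
    GdeltaDense (lcSet X) := by
  intro G hG ⟨p, hp⟩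
  by_contra hGlc
  obtain ⟨f, hf0, hfp, hfG⟩ := exists_nonneg_zero_of_isGδ hG hp
  have hO : IsOpen[openPointTop X] {h : C(X, ℝ) | ∃ x ∈ univ, h x = 0} :=
    isOpen_generateFrom_of_mem ⟨univ, 0, isOpen_univ, rfl⟩
  obtain ⟨t, ht, htc, htO⟩ := @exists_mem_nhds_isClosed_subset _ (biCompactOpenTop X) hreg f _
    (@IsOpen.mem_nhds _ (biCompactOpenTop X) _ _ (hO.mono inf_le_right) ⟨p, trivial, hfp⟩)
  obtain ⟨W, hW, C, hC, hWCt⟩ := exists_mem_nhds_inter_attainsAll_subset ht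
  obtain ⟨η, hη0, hWη, hηC⟩ := exists_pos_sup_const_mem_nhds hf0 hW C Prod.snd
  have hg := mem_closure_inter_attainsAll hWη fun c hc => by
    obtain ⟨hcU, w, hw, hfw⟩ := hC c hc
    refine ⟨hcU, ?_⟩
    rcases (hfw ▸ hf0 w).lt_or_eq with hpos | hzero
    · exact Or.inl ⟨w, hw, by simp [hfw, hηC c hc hpos]⟩
    · exact Or.inr ⟨w, hw, fun hlc => hGlc ⟨w, hfG w (hfw.trans hzero.symm), hlc⟩⟩
  obtain ⟨x, -, hx⟩ := htO ((@closure_minimal _ (biCompactOpenTop X) _ _ hWCt htc) hg)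
  exact (hη0.trans_le (le_max_right (f x) η)).ne' hx

theorem stmt4 {X : Type*} [TopologicalSpace X] [T2Space X] [CompletelyRegularSpace X]
    (hreg : @RegularSpace C(X, ℝ) (biCompactOpenTop X)) :
    GdeltaDense (lcSet X) :=
  stmt4_general hreg
end

section
/- For a Tychonoff space X, if lc(X) is G_δ-dense in X, then the space C_kh(X) with the bi-compact-open topology is completely regular. -/
open Set TopologicalSpace Filter

open Topology

/-!
The bi-compact-open topology is the join of the compact-open topology, which is completely
regular, and the open-point topology. It therefore suffices to find, for every subbasic open-point
set `[U, r]⁻` and every `f` in it, a `kh`-continuous real function separating `f` from its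
complement. By `Gδ`-density of `lc X`, the `Gδ`-set `U ∩ f⁻¹(r)` contains a point `y` with a compact
neighbourhood, which carries a bump function `b` with compact support in `U`. The function
`g ↦ sup {b z | g z = r}` is lower semicontinuous for the open-point topology (it exceeds `a ≥ 0`
iff `g` takes the value `r` on `{b > a}`) and upper semicontinuous for the compact-open topology
(it is `< a'` as soon as `g` avoids `r` on the compact set `{b ≥ a'}`), hence `kh`-continuous.
-/

theorem completelyRegularSpace_inf_generateFrom {α : Type*} {t : TopologicalSpace α}
    (ht : @CompletelyRegularSpace α t) {B : Set (Set α)}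
    (hB : ∀ s ∈ B, ∀ x ∈ s, ∃ φ : α → ℝ, Continuous[t ⊓ generateFrom B, _] φ ∧
      ∃ W : Set ℝ, IsOpen W ∧ φ x ∈ W ∧ φ ⁻¹' W ⊆ s) :
    @CompletelyRegularSpace α (t ⊓ generateFrom B) := by
  let F := {φ : α → ℝ // Continuous[t ⊓ generateFrom B, _] φ}
  have hweak : t ⊓ generateFrom B = t ⊓ ⨅ φ : F, induced φ.1 inferInstance := by
    refine le_antisymm (le_inf inf_le_left (le_iInf fun φ => continuous_iff_le_induced.1 φ.2))
      (le_inf inf_le_left (inf_le_right.trans (le_generateFrom fun s hs => ?_)))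
    rw [@isOpen_iff_forall_mem_open]
    intro x hx
    obtain ⟨φ, hφ, W, hW, hxW, hWs⟩ := hB s hs x hx
    exact ⟨φ ⁻¹' W, hWs, (isOpen_induced hW).mono (iInf_le _ (⟨φ, hφ⟩ : F)), hxW⟩
  rw [hweak]
  exact completelyRegularSpace_inf ht
    (completelyRegularSpace_iInf fun _ => completelyRegularSpace_induced inferInstance _)

theorem exists_hasCompactSupport_of_mem_lcSet {X : Type*} [TopologicalSpace X]
    [CompletelyRegularSpace X] {y : X} (hy : y ∈ lcSet X) {U : Set X} (hU : U ∈ 𝓝 y) :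
    ∃ b : X → ℝ, Continuous b ∧ HasCompactSupport b ∧ 0 ≤ b ∧ 0 < b y ∧
      Function.support b ⊆ U := by
  obtain ⟨N, hNc, hN⟩ := hy
  obtain ⟨C, hC, hCcl, hCsub⟩ := exists_mem_nhds_isClosed_subset (inter_mem hN hU)
  obtain ⟨β, hβc, hβy, hβ1⟩ := CompletelyRegularSpace.completely_regular_isOpen y (interior C)
    isOpen_interior (mem_interior_iff_mem_nhds.2 hC)
  have hvanish : ∀ z ∉ C, 1 - (β z : ℝ) = 0 := fun z hz => by
    rw [hβ1 fun hzC => hz (interior_subset hzC)]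
    simp
  refine ⟨fun z => 1 - β z, continuous_const.sub (continuous_subtype_val.comp hβc),
    .intro' (hNc.of_isClosed_subset hCcl fun z hz => (hCsub hz).1) hCcl hvanish,
    fun z => sub_nonneg.2 (β z).2.2, by simp [hβy], fun z hz => ?_⟩
  by_contra hzU
  exact hz (hvanish z fun hzC => hzU (hCsub hzC).2)

section FiberSup

variable {X : Type*} [TopologicalSpace X] {b : X → ℝ} {r : ℝ}

/-- On an empty fibre `sSup ∅ = 0`, which is the natural value for nonnegative `b`. -/
noncomputable def fiberSup (b : X → ℝ) (r : ℝ) (g : C(X, ℝ)) : ℝ :=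
  sSup (b '' (g ⁻¹' {r}))

theorem fiberSup_nonneg (hb : 0 ≤ b) (g : C(X, ℝ)) : 0 ≤ fiberSup b r g :=
  Real.sSup_nonneg (by rintro _ ⟨z, _, rfl⟩; exact hb z)

theorem le_fiberSup (hbdd : BddAbove (range b)) {g : C(X, ℝ)} {z : X} (hz : g z = r) :
    b z ≤ fiberSup b r g :=
  le_csSup (hbdd.mono (image_subset_range _ _)) ⟨z, hz, rfl⟩

theorem fiberSup_le {g : C(X, ℝ)} {a : ℝ} (ha : 0 ≤ a) (h : ∀ z, g z = r → b z ≤ a) :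
    fiberSup b r g ≤ a :=
  Real.sSup_le (by rintro _ ⟨z, hz, rfl⟩; exact h z hz) ha

theorem lt_fiberSup_iff (hbdd : BddAbove (range b)) {g : C(X, ℝ)} {a : ℝ} (ha : 0 ≤ a) :
    a < fiberSup b r g ↔ ∃ z, g z = r ∧ a < b z := by
  refine ⟨fun h => ?_, fun ⟨z, hz, hbz⟩ => hbz.trans_le (le_fiberSup hbdd hz)⟩
  by_contra! hle
  exact h.not_ge (fiberSup_le ha hle)

theorem isOpen_openPointTop_fiberSup_preimage_Ioi (hbc : Continuous b) (hbdd : BddAbove (range b))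
    (hb : 0 ≤ b) (a : ℝ) : IsOpen[openPointTop X] (fiberSup b r ⁻¹' Ioi a) := by
  rcases lt_or_ge a 0 with ha | ha
  · have huniv : fiberSup b r ⁻¹' Ioi a = univ :=
      eq_univ_of_forall fun g => ha.trans_le (fiberSup_nonneg hb g)
    rw [huniv]
    exact @isOpen_univ _ (openPointTop X)
  · have hpre : fiberSup b r ⁻¹' Ioi a = {g : C(X, ℝ) | ∃ z ∈ b ⁻¹' Ioi a, g z = r} := by
      ext g
      simp only [mem_preimage, mem_Ioi, lt_fiberSup_iff hbdd ha, mem_ofPred_eq, and_comm]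
    rw [hpre]
    exact isOpen_generateFrom_of_mem ⟨_, r, isOpen_Ioi.preimage hbc, rfl⟩

theorem isOpen_fiberSup_preimage_Iio (hbc : Continuous b) (hbs : HasCompactSupport b)
    (hb : 0 ≤ b) (a : ℝ) : IsOpen (fiberSup b r ⁻¹' Iio a) := by
  refine isOpen_iff_forall_mem_open.2 fun g hg => ?_
  obtain ⟨a', hga', ha'a⟩ := exists_between (show fiberSup b r g < a from hg)
  have ha' : 0 < a' := (fiberSup_nonneg hb g).trans_lt hga'
  refine ⟨{h | MapsTo h (b ⁻¹' Ici a') {r}ᶜ}, fun h hh => ?_,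
    ContinuousMap.isOpen_setOfPred_mapsTo
      (hbs.isCompact_preimage hbc isClosed_Ici (by simpa using ha'))
      isClosed_singleton.isOpen_compl, fun z hz hgz => ?_⟩
  · refine (fiberSup_le ha'.le fun z hz => ?_).trans_lt ha'a
    by_contra! hbz
    exact hh hbz.le hz
  · exact hga'.not_ge <| (mem_Ici.1 hz).trans <|
      le_fiberSup (hbc.bddAbove_range_of_hasCompactSupport hbs) hgz

theorem continuous_biCompactOpenTop_fiberSup (hbc : Continuous b) (hbs : HasCompactSupport b)
    (hb : 0 ≤ b) : Continuous[biCompactOpenTop X, _] (fiberSup b r) := by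
  let := biCompactOpenTop X
  refine continuous_iff_lower_upperSemicontinuous.2
    ⟨lowerSemicontinuous_iff_isOpen_preimage.2 fun a => ?_,
      upperSemicontinuous_iff_isOpen_preimage.2 fun a => ?_⟩
  · exact (isOpen_openPointTop_fiberSup_preimage_Ioi hbc
      (hbc.bddAbove_range_of_hasCompactSupport hbs) hb a).mono inf_le_right
  · exact (isOpen_fiberSup_preimage_Iio hbc hbs hb a).mono inf_le_left

end FiberSup

theorem stmt5_general {X : Type*} [TopologicalSpace X] [CompletelyRegularSpace X] (hlc : GdeltaDense (lcSet X)) :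
    @CompletelyRegularSpace C(X, ℝ) (biCompactOpenTop X) := by
  refine completelyRegularSpace_inf_generateFrom inferInstance ?_
  rintro _ ⟨U, r, hU, rfl⟩ f ⟨x, hxU, hfx⟩
  obtain ⟨y, ⟨hyU, hyr⟩, hy⟩ :=
    hlc _ (hU.isGδ.inter ((IsGδ.singleton r).preimage f.continuous)) ⟨x, hxU, hfx⟩
  obtain ⟨b, hbc, hbs, hb, hby, hbU⟩ :=
    exists_hasCompactSupport_of_mem_lcSet hy (hU.mem_nhds hyU)
  have hbdd := hbc.bddAbove_range_of_hasCompactSupport hbs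
  refine ⟨fiberSup b r, continuous_biCompactOpenTop_fiberSup hbc hbs hb, Ioi 0, isOpen_Ioi,
    hby.trans_le (le_fiberSup hbdd hyr), fun g hg => ?_⟩
  obtain ⟨z, hgz, hbz⟩ := (lt_fiberSup_iff hbdd le_rfl).1 hg
  exact ⟨z, hbU hbz.ne', hgz⟩

theorem stmt5 {X : Type*} [TopologicalSpace X] [T2Space X] [CompletelyRegularSpace X] (hlc : GdeltaDense (lcSet X)) :
    @CompletelyRegularSpace C(X, ℝ) (biCompactOpenTop X) :=
  stmt5_general hlc
end

section
/- For a Tychonoff space X, the bi-point-open topology and the bi-compact-open topology on C(X,ℝ) coincide if and only if every compact subset of X is finite. -/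
open Set TopologicalSpace Filter

open Topology in
theorem stmt6 {X : Type*} [TopologicalSpace X] [T2Space X] [CompletelyRegularSpace X] :
    biPointOpenTop X = biCompactOpenTop X ↔
      ∀ K : Set X, IsCompact K → K.Finite := by
  classical
  rw [biPointOpenTop, biCompactOpenTop, pointOpenTop, openPointTop]
  constructor
  · intro heq K hK
    by_contra hfin
    have hKinf : K.Infinite := hfin
    set W : Set C(X, ℝ) := {f | MapsTo f K (Ioo (-1 : ℝ) 1)} with hW
    have hWopen : IsOpen[ContinuousMap.compactOpen ⊓ TopologicalSpace.generateFrom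
        {S | ∃ (U : Set X) (r : ℝ), IsOpen U ∧ S = {f : C(X, ℝ) | ∃ x ∈ U, f x = r}}] W :=
      (inf_le_left : _ ≤ (ContinuousMap.compactOpen : TopologicalSpace C(X,ℝ))) W
        (ContinuousMap.isOpen_setOf_mapsTo hK isOpen_Ioo)
    rw [← heq, ← generateFrom_union] at hWopen
    have key : ∀ O : Set C(X, ℝ), GenerateOpen
        ({S | ∃ (x : X) (V : Set ℝ), IsOpen V ∧ S = {f : C(X, ℝ) | f x ∈ V}} ∪
         {S | ∃ (U : Set X) (r : ℝ), IsOpen U ∧ S = {f : C(X, ℝ) | ∃ x ∈ U, f x = r}}) O →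
        (0 : C(X, ℝ)) ∈ O → ∃ F : Finset X,
          ∀ g : C(X, ℝ), (∀ x ∈ F, g x = 0) → g ∈ O := by
      intro O hO
      induction hO with
      | basic S hS =>
        intro h0
        rcases hS with ⟨x, V, hV, rfl⟩ | ⟨U, r, hU, rfl⟩
        · exact ⟨{x}, fun g hg => by
            have := hg x (Finset.mem_singleton_self x)
            simpa [this] using h0⟩
        · obtain ⟨y, hy, hr⟩ := h0
          have hr0 : r = 0 := by simpa using hr.symm
          exact ⟨{y}, fun g hg => ⟨y, hy, by simp [hg y (Finset.mem_singleton_self y), hr0]⟩⟩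
      | univ => exact fun _ => ⟨∅, fun g _ => trivial⟩
      | inter S T _ _ ihS ihT =>
        intro h0
        obtain ⟨F1, h1⟩ := ihS h0.1
        obtain ⟨F2, h2⟩ := ihT h0.2
        exact ⟨F1 ∪ F2,
          fun g hg => ⟨h1 g (fun x hx => hg x (Finset.mem_union_left _ hx)),
            h2 g (fun x hx => hg x (Finset.mem_union_right _ hx))⟩⟩
      | sUnion S _ ih =>
        intro h0
        obtain ⟨s, hs, h0s⟩ := h0
        obtain ⟨F, hF⟩ := ih s hs h0s
        exact ⟨F, fun g hg => ⟨s, hs, hF g hg⟩⟩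
    have h0W : (0 : C(X, ℝ)) ∈ W := fun x _ => by simp [mem_Ioo]
    obtain ⟨F, hF⟩ := key W hWopen h0W
    obtain ⟨x0, hx0K, hx0F⟩ := (hKinf.diff (F.finite_toSet)).nonempty
    have hFclosed : IsClosed (F : Set X) := F.finite_toSet.isClosed
    obtain ⟨f, hfc, hf0, hf1⟩ := CompletelyRegularSpace.completely_regular x0 F hFclosed hx0F
    set g : C(X, ℝ) := ⟨fun x => 2 * (1 - (f x : ℝ)), continuous_const.mul (continuous_const.sub (continuous_subtype_val.comp hfc))⟩ with hg
    have hgF : ∀ x ∈ F, g x = 0 := by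
      intro x hx
      have := hf1 hx
      simp only [hg, ContinuousMap.coe_mk]
      rw [this]
      norm_num
    have hgW := hF g hgF hx0K
    have hg2 : g x0 = 2 := by
      simp only [hg, ContinuousMap.coe_mk]
      rw [hf0]
      norm_num
    rw [hg2] at hgW
    exact absurd hgW.2 (by norm_num)
  · intro h
    have hpo : TopologicalSpace.generateFrom
        {S | ∃ (x : X) (V : Set ℝ), IsOpen V ∧ S = {f : C(X, ℝ) | f x ∈ V}} =
        (ContinuousMap.compactOpen : TopologicalSpace C(X, ℝ)) := by
      apply le_antisymm
      · rw [ContinuousMap.compactOpen_eq]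
        refine le_generateFrom_iff_subset_isOpen.2 ?_
        rintro m ⟨K, hK, U, hU, rfl⟩
        simp only [mem_setOf_eq]
        have hKfin : K.Finite := h K hK
        have heq2 : {f : C(X, ℝ) | MapsTo f K U} = ⋂ x ∈ K, {f : C(X, ℝ) | f x ∈ U} := by
          ext f; simp [MapsTo]
        rw [heq2]
        exact @Set.Finite.isOpen_biInter C(X, ℝ) X
          (TopologicalSpace.generateFrom
            {S | ∃ (x : X) (V : Set ℝ), IsOpen V ∧ S = {f : C(X, ℝ) | f x ∈ V}})
          K _ hKfin (fun x _ =>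
          TopologicalSpace.isOpen_generateFrom_of_mem ⟨x, U, hU, rfl⟩)
      · refine le_generateFrom_iff_subset_isOpen.2 ?_
        rintro S ⟨x, V, hV, rfl⟩
        have heq2 : {f : C(X, ℝ) | f x ∈ V} = {f : C(X, ℝ) | MapsTo f {x} V} := by
          ext f; simp [MapsTo]
        simp only [mem_setOf_eq]
        rw [heq2]
        exact ContinuousMap.isOpen_setOf_mapsTo isCompact_singleton hV
    rw [hpo]
end

section
/- For a Tychonoff space X, the topology of pointwise convergence on C(X,ℝ) equals the compact-open topology if and only if the bi-point-open topology equals the bi-compact-open topology. -/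
open Set TopologicalSpace Filter

section Aux

open Set TopologicalSpace Filter Topology

variable {X : Type*} [TopologicalSpace X]

lemma k_le_p : (ContinuousMap.compactOpen : TopologicalSpace C(X, ℝ)) ≤ pointOpenTop X := by
  refine le_generateFrom ?_
  rintro s ⟨x, V, hV, rfl⟩
  have hEq : {f : C(X, ℝ) | f x ∈ V} = {f : C(X, ℝ) | Set.MapsTo f {x} V} := by
    ext f; simp [Set.mapsTo_singleton]
  rw [hEq]
  exact ContinuousMap.isOpen_setOf_mapsTo isCompact_singleton hV

lemma p_le_k (hfin : ∀ K : Set X, IsCompact K → K.Finite) :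
    pointOpenTop X ≤ (ContinuousMap.compactOpen : TopologicalSpace C(X, ℝ)) := by
  rw [ContinuousMap.compactOpen_eq]
  refine le_generateFrom ?_
  rintro s ⟨K, hK, U, hU, rfl⟩
  beta_reduce
  have hEq : {f : C(X, ℝ) | Set.MapsTo f K U} = ⋂ x ∈ K, {f : C(X, ℝ) | f x ∈ U} := by
    ext f; simp [Set.MapsTo]
  rw [hEq]
  exact @Set.Finite.isOpen_biInter C(X, ℝ) X (pointOpenTop X) K _ (hfin K hK)
    (fun x _ => isOpen_generateFrom_of_mem ⟨x, U, hU, rfl⟩)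

lemma compacts_finite [T2Space X] [CompletelyRegularSpace X]
    (h : biPointOpenTop X = biCompactOpenTop X) {K : Set X} (hK : IsCompact K) : K.Finite := by
  by_contra hfin'
  have hfin : K.Infinite := hfin'
  set Sp := {S | ∃ (x : X) (V : Set ℝ), IsOpen V ∧ S = {f : C(X, ℝ) | f x ∈ V}} with hSp
  set Sh := {S | ∃ (U : Set X) (r : ℝ), IsOpen U ∧
      S = {f : C(X, ℝ) | ∃ x ∈ U, f x = r}} with hSh
  have hph : biPointOpenTop X = generateFrom (Sp ∪ Sh) := by
    rw [generateFrom_union]; rfl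
  set c : C(X, ℝ) := ContinuousMap.const X (1 / 2) with hc
  set W : Set C(X, ℝ) := {f | Set.MapsTo f K (Set.Ioo (0 : ℝ) 1)} with hW
  have hcW : c ∈ W := by
    intro x hx
    constructor <;> norm_num [hc]
  have hWopen : IsOpen[biPointOpenTop X] W := by
    rw [h]
    exact IsOpen.mono (ContinuousMap.isOpen_setOf_mapsTo hK isOpen_Ioo)
      (inf_le_left (b := openPointTop X))
  have hbasis := @isTopologicalBasis_of_subbasis C(X, ℝ) (biPointOpenTop X) (Sp ∪ Sh) hph
  obtain ⟨b, ⟨T, ⟨hTfin, hTsub⟩, rfl⟩, hcb, hbW⟩ :=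
    @IsTopologicalBasis.exists_subset_of_mem_open C(X, ℝ) (biPointOpenTop X) _ hbasis c W hcW hWopen
  -- for each subbasic set in T, extract data
  have key : ∀ s ∈ T, ∃ E : Set X, E.Finite ∧
      ∀ z ∉ E, ∃ w, w ≠ z ∧ ∀ g : C(X, ℝ), g w = 1 / 2 → g ∈ s := by
    intro s hs
    have hcs : c ∈ s := hcb s hs
    rcases hTsub hs with hsp | hsh
    · obtain ⟨x, V, hV, rfl⟩ := hsp
      have hcV : (1 / 2 : ℝ) ∈ V := hcs
      refine ⟨{x}, Set.finite_singleton x, fun z hz => ⟨x, ?_, fun g hg => ?_⟩⟩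
      · rintro rfl; exact hz rfl
      · simpa [hg] using hcV
    · obtain ⟨U, r, hU, rfl⟩ := hsh
      obtain ⟨y, hyU, hyr⟩ := hcs
      have hr : r = 1 / 2 := by simpa [hc] using hyr.symm
      subst hr
      by_cases hsing : ∃ u, U = {u}
      · obtain ⟨u, rfl⟩ := hsing
        refine ⟨{u}, Set.finite_singleton u, fun z hz => ⟨u, ?_, fun g hg => ⟨u, rfl, hg⟩⟩⟩
        rintro rfl; exact hz rfl
      · refine ⟨∅, Set.finite_empty, fun z _ => ?_⟩
        have hwex : ∃ w ∈ U, w ≠ z := by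
          by_contra hcon
          push_neg at hcon
          exact hsing ⟨z, Set.eq_singleton_iff_nonempty_unique_mem.2 ⟨⟨y, hyU⟩, hcon⟩⟩
        obtain ⟨w, hwU, hwz⟩ := hwex
        exact ⟨w, hwz, fun g hg => ⟨w, hwU, hg⟩⟩
  choose E hEfin hE using key
  have hbadfin : (⋃ s : T, E s s.2).Finite := by
    haveI := hTfin.to_subtype
    exact Set.finite_iUnion fun s => hEfin s s.2
  obtain ⟨z, hzK, hzbad⟩ := (hfin.diff hbadfin).nonempty
  have hzE : ∀ s : T, z ∉ E s s.2 := fun s hz' => hzbad (Set.mem_iUnion.2 ⟨s, hz'⟩)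
  choose w hwz hw using fun s : T => hE s s.2 z (hzE s)
  have hFfin : (Set.range w).Finite := by
    haveI := hTfin.to_subtype
    exact Set.finite_range w
  have hzF : z ∉ Set.range w := by
    rintro ⟨s, hwsz⟩
    exact hwz s hwsz
  obtain ⟨φ, hφc, hφz, hφF⟩ :=
    CompletelyRegularSpace.completely_regular z (Set.range w) hFfin.isClosed hzF
  set g : C(X, ℝ) := ⟨fun x => 2 - (3 / 2) * (φ x : ℝ),
    by fun_prop⟩ with hg
  have hgT : g ∈ ⋂₀ T := by
    intro s hs
    refine hw ⟨s, hs⟩ g ?_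
    have : φ (w ⟨s, hs⟩) = 1 := hφF (Set.mem_range_self _)
    simp [hg, this]
    norm_num
  have hgW : g ∈ W := hbW hgT
  have := (hgW hzK).2
  rw [hg] at this
  simp only [ContinuousMap.coe_mk, hφz] at this
  norm_num at this

end Aux

theorem stmt7 {X : Type*} [TopologicalSpace X] [T2Space X] [CompletelyRegularSpace X] :
    pointOpenTop X = (ContinuousMap.compactOpen : TopologicalSpace C(X, ℝ)) ↔
      biPointOpenTop X = biCompactOpenTop X := by
  constructor
  · intro h
    unfold biPointOpenTop biCompactOpenTop
    rw [h]
  · intro h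
    exact le_antisymm (p_le_k fun K hK => compacts_finite h hK) k_le_p
end

section
/- For a nonempty Tychonoff space X, the open-point topology on C(X,ℝ) is never weaker than or equal to the compact-open topology; that is, there is an open-point-open set that is not open in the compact-open topology. Concretely, for any nonempty open U ⊆ X, the set [U,0]⁻ is open in the open-point topology but not open in the compact-open topology. -/
open Set TopologicalSpace Filter

theorem stmt9 {X : Type*} [TopologicalSpace X] [T2Space X] [CompletelyRegularSpace X] [Nonempty X]
    (U : Set X) (hU : IsOpen U) (hne : U.Nonempty) :
    @IsOpen C(X, ℝ) (openPointTop X) {f : C(X, ℝ) | ∃ x ∈ U, f x = 0} ∧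
    ¬ @IsOpen C(X, ℝ) ContinuousMap.compactOpen {f : C(X, ℝ) | ∃ x ∈ U, f x = 0} := by
  constructor
  · exact TopologicalSpace.GenerateOpen.basic _ ⟨U, 0, hU, rfl⟩
  · intro hop
    have hc : Continuous (fun r : ℝ => (ContinuousMap.const X r : C(X, ℝ))) :=
      ContinuousMap.continuous_const'
    have hpre : IsOpen ((fun r : ℝ => (ContinuousMap.const X r : C(X, ℝ))) ⁻¹'
        {f : C(X, ℝ) | ∃ x ∈ U, f x = 0}) := hop.preimage hc
    obtain ⟨x0, hx0⟩ := hne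
    have h0 : (0 : ℝ) ∈ (fun r : ℝ => (ContinuousMap.const X r : C(X, ℝ))) ⁻¹'
        {f : C(X, ℝ) | ∃ x ∈ U, f x = 0} := ⟨x0, hx0, rfl⟩
    obtain ⟨ε, hε, hball⟩ := Metric.isOpen_iff.mp hpre 0 h0
    have hmem : (ε / 2 : ℝ) ∈ Metric.ball (0 : ℝ) ε := by
      rw [Metric.mem_ball, Real.dist_eq, sub_zero, abs_of_pos (half_pos hε)]
      linarith
    obtain ⟨x, _, hx⟩ := hball hmem
    simp only [ContinuousMap.const_apply] at hx
    linarith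
end

section
/- For a Tychonoff space X, the bi-compact-open topology on C(X,ℝ) equals the open-point topology if and only if X is discrete. -/
open Set TopologicalSpace Filter

open Topology

/-! If `X` is discrete, compact sets are finite and `{f | f x ∈ V} = ⋃ r ∈ V, [{x}, r]⁻`, so the
open-point topology refines the compact-open one. Conversely, at a non-isolated point `x` a basic
open-point neighbourhood `⋂ᵢ [Uᵢ, 0]⁻` of `0` only asks a function to vanish somewhere in each `Uᵢ`,
and these places can be chosen away from `x`; complete regularity then yields members of it taking
any value at `x`, so the compact-open neighbourhood `{f | f x < 1}` of `0` is not open-point open. -/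

section

variable {X : Type*} [TopologicalSpace X]

lemma isOpen_openPointTop_setOf_exists_apply_eq {U : Set X} (hU : IsOpen U) (r : ℝ) :
    IsOpen[openPointTop X] {f : C(X, ℝ) | ∃ x ∈ U, f x = r} :=
  isOpen_generateFrom_of_mem ⟨U, r, hU, rfl⟩

lemma isOpen_openPointTop_setOf_apply_mem {x : X} (hx : IsOpen {x}) (V : Set ℝ) :
    IsOpen[openPointTop X] {f : C(X, ℝ) | f x ∈ V} := by
  have hunion : {f : C(X, ℝ) | f x ∈ V} =
      ⋃ r ∈ V, {f : C(X, ℝ) | ∃ y ∈ ({x} : Set X), f y = r} := by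
    ext f; simp
  rw [hunion]
  exact @isOpen_biUnion _ _ (openPointTop X) _ _ fun r _ ↦
    isOpen_openPointTop_setOf_exists_apply_eq hx r

lemma openPointTop_le_compactOpen [DiscreteTopology X] :
    openPointTop X ≤ ContinuousMap.compactOpen := by
  rw [ContinuousMap.compactOpen_eq]
  refine le_generateFrom ?_
  rintro _ ⟨K, hK, V, -, rfl⟩
  change IsOpen[openPointTop X] {f : C(X, ℝ) | MapsTo f K V}
  have hinter : {f : C(X, ℝ) | MapsTo f K V} = ⋂ x ∈ K, {f : C(X, ℝ) | f x ∈ V} := by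
    ext f; simp [MapsTo]
  rw [hinter]
  exact @Finite.isOpen_biInter _ _ (openPointTop X) _ _ hK.finite_of_discrete fun x _ ↦
    isOpen_openPointTop_setOf_apply_mem (isOpen_discrete {x}) V

lemma CompletelyRegularSpace.exists_continuousMap_apply_eq_eqOn_zero [CompletelyRegularSpace X]
    {K : Set X} {x : X} (hK : IsClosed K) (hx : x ∉ K) (c : ℝ) :
    ∃ g : C(X, ℝ), g x = c ∧ EqOn g 0 K := by
  obtain ⟨f, hf, hfx, hfK⟩ := CompletelyRegularSpace.completely_regular x K hK hx
  refine ⟨⟨fun y ↦ c * (1 - f y), by fun_prop⟩, by simp [hfx], fun y hy ↦ ?_⟩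
  simp [hfK hy]

lemma exists_mem_ne_of_not_isOpen_singleton {U : Set X} {x : X} (hU : IsOpen U)
    (hne : U.Nonempty) (hx : ¬IsOpen {x}) : ∃ y ∈ U, y ≠ x := by
  by_contra! hUx
  exact hx (eq_singleton_iff_nonempty_unique_mem.mpr ⟨hne, hUx⟩ ▸ hU)

lemma zero_mem_closure_openPointTop_setOf_apply_eq [T1Space X] [CompletelyRegularSpace X]
    {x : X} (hx : ¬IsOpen {x}) (c : ℝ) :
    (0 : C(X, ℝ)) ∈ closure[openPointTop X] {g | g x = c} := by
  rw [IsTopologicalBasis.mem_closure_iff (t := openPointTop X)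
    (isTopologicalBasis_of_subbasis (t := openPointTop X) rfl)]
  rintro _ ⟨F, ⟨hF, hFsub⟩, rfl⟩ h0
  have hwitness : ∀ S ∈ F, ∃ y ≠ x, ∀ g : C(X, ℝ), g y = 0 → g ∈ S := by
    intro S hS
    obtain ⟨U, r, hU, rfl⟩ := hFsub hS
    obtain ⟨z, hz, hr⟩ := h0 _ hS
    obtain ⟨y, hy, hyx⟩ := exists_mem_ne_of_not_isOpen_singleton hU ⟨z, hz⟩ hx
    exact ⟨y, hyx, fun g hg ↦ ⟨y, hy, hg.trans hr⟩⟩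
  have : Nonempty X := ⟨x⟩
  choose! y hyx hy using hwitness
  have hxK : x ∉ y '' F := by
    rintro ⟨S, hS, hSx⟩
    exact hyx S hS hSx
  obtain ⟨g, hgx, hgK⟩ := CompletelyRegularSpace.exists_continuousMap_apply_eq_eqOn_zero
    (hF.image y).isClosed hxK c
  exact ⟨g, fun S hS ↦ hy S hS g (hgK (mem_image_of_mem y hS)), hgx⟩

lemma isOpen_singleton_of_openPointTop_le_compactOpen [T1Space X] [CompletelyRegularSpace X]
    (h : openPointTop X ≤ ContinuousMap.compactOpen) (x : X) : IsOpen {x} := by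
  by_contra hx
  have hW : IsOpen ((fun g : C(X, ℝ) ↦ g x) ⁻¹' Iio 1) :=
    isOpen_Iio.preimage (continuous_eval_const x)
  obtain ⟨g, hgW, hgx⟩ := (@mem_closure_iff _ (openPointTop X) _ _).mp
    (zero_mem_closure_openPointTop_setOf_apply_eq hx 1) _ (h _ hW) (by simp)
  exact (hgx ▸ hgW : (1 : ℝ) < 1).false

theorem openPointTop_le_compactOpen_iff [T1Space X] [CompletelyRegularSpace X] :
    openPointTop X ≤ ContinuousMap.compactOpen ↔ DiscreteTopology X :=
  ⟨fun h ↦ discreteTopology_iff_isOpen_singleton.mpr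
    (isOpen_singleton_of_openPointTop_le_compactOpen h),
    fun _ ↦ openPointTop_le_compactOpen⟩

end

theorem stmt10 {X : Type*} [TopologicalSpace X] [T2Space X] [CompletelyRegularSpace X] :
    biCompactOpenTop X = openPointTop X ↔ DiscreteTopology X :=
  inf_eq_right.trans openPointTop_le_compactOpen_iff
end

section
/- For a Tychonoff space X, if the singleton of the constant zero function is a G_δ-set in C_kh(X), then X is almost σ-compact, i.e., X has a dense subset that is a countable union of compact sets. -/
open Set TopologicalSpace Filter

open Topology in
/-- Key extraction lemma: any `biCompactOpenTop`-open set containing `0` contains all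
functions vanishing on some compact set. -/
lemma key_vanish {X : Type*} [TopologicalSpace X] {G : Set C(X, ℝ)}
    (hG : IsOpen[biCompactOpenTop X] G) (h0 : (0 : C(X, ℝ)) ∈ G) :
    ∃ C : Set X, IsCompact C ∧ ∀ f : C(X, ℝ), (∀ x ∈ C, f x = 0) → f ∈ G := by
  classical
  set S : Set (Set C(X, ℝ)) :=
    (Set.image2 (fun K U ↦ {f : C(X, ℝ) | Set.MapsTo f K U}) {K : Set X | IsCompact K}
        {U : Set ℝ | IsOpen U}) ∪
      {S | ∃ (U : Set X) (r : ℝ), IsOpen U ∧ S = {f : C(X, ℝ) | ∃ x ∈ U, f x = r}} with hS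
  have htop : biCompactOpenTop X = generateFrom S := by
    rw [hS, generateFrom_union]; rfl
  rw [htop] at hG
  have h1 : G ∈ @nhds _ (generateFrom S) 0 := by
    letI := generateFrom S
    exact hG.mem_nhds h0
  rw [nhds_generateFrom, ← Filter.generate_eq_biInf, Filter.mem_generate_iff] at h1
  obtain ⟨t, hts, htfin, htG⟩ := h1
  have hch : ∀ s : Set C(X, ℝ), ∃ C : Set X,
      IsCompact C ∧ (s ∈ t → ∀ f : C(X, ℝ), (∀ x ∈ C, f x = 0) → f ∈ s) := by
    intro s
    by_cases hst : s ∈ t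
    · obtain ⟨h0s, hsS⟩ := hts hst
      rcases hsS with hsS | hsS
      · obtain ⟨K, hK, U, hU, rfl⟩ := hsS
        refine ⟨K, hK, fun _ f hf x hx => ?_⟩
        have h0U : (0 : ℝ) ∈ U := h0s hx
        simpa [hf x hx] using h0U
      · obtain ⟨U, r, hU, rfl⟩ := hsS
        obtain ⟨y, hyU, hy0⟩ := h0s
        have hr : r = 0 := by simpa using hy0.symm
        exact ⟨{y}, isCompact_singleton, fun _ f hf =>
          ⟨y, hyU, by rw [hf y rfl, hr]⟩⟩
    · exact ⟨∅, isCompact_empty, fun h => absurd h hst⟩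
  choose C hCcomp hCmem using hch
  refine ⟨⋃ s ∈ t, C s, htfin.isCompact_biUnion fun s _ => hCcomp s, fun f hf => ?_⟩
  refine htG fun s hst => hCmem s hst f fun x hx => ?_
  exact hf x (Set.mem_biUnion hst hx)

theorem stmt11 {X : Type*} [TopologicalSpace X] [T2Space X] [CompletelyRegularSpace X]
    (h : @IsGδ C(X, ℝ) (biCompactOpenTop X) {(0 : C(X, ℝ))}) :
    AlmostSigmaCompact X := by
  classical
  obtain ⟨T, hTo, hTc, hTeq⟩ := h
  obtain ⟨Gs, hGs⟩ := (hTc.insert Set.univ).exists_eq_range (Set.insert_nonempty _ _)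
  have hGopen : ∀ n, @IsOpen _ (biCompactOpenTop X) (Gs n) := by
    intro n
    have : Gs n ∈ insert Set.univ T := by rw [hGs]; exact Set.mem_range_self n
    rcases this with h' | h'
    · rw [h']; exact @isOpen_univ _ (biCompactOpenTop X)
    · exact hTo _ h'
  have hG0 : ∀ n, (0 : C(X, ℝ)) ∈ Gs n := by
    intro n
    have : Gs n ∈ insert Set.univ T := by rw [hGs]; exact Set.mem_range_self n
    rcases this with h' | h'
    · rw [h']; trivial
    · have h0 : (0 : C(X, ℝ)) ∈ ⋂₀ T := by rw [← hTeq]; rfl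
      exact h0 _ h'
  have hGsub : (⋂ n, Gs n) ⊆ {(0 : C(X, ℝ))} := by
    intro f hf
    rw [hTeq]
    intro s hs
    have : s ∈ insert Set.univ T := Set.mem_insert_of_mem _ hs
    rw [hGs] at this
    obtain ⟨n, rfl⟩ := this
    exact Set.mem_iInter.1 hf n
  choose C hCcomp hCmem using fun n => key_vanish (hGopen n) (hG0 n)
  refine ⟨C, hCcomp, ?_⟩
  by_contra hd
  rw [dense_iff_closure_eq] at hd
  obtain ⟨x₀, hx₀⟩ : ∃ x₀, x₀ ∉ closure (⋃ n, C n) := by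
    by_contra hall
    push_neg at hall
    exact hd (Set.eq_univ_of_forall hall)
  obtain ⟨φ, hφc, hφ0, hφ1⟩ :=
    CompletelyRegularSpace.completely_regular x₀ (closure (⋃ n, C n)) isClosed_closure hx₀
  set g : C(X, ℝ) := ⟨fun x => 1 - (φ x : ℝ),
    continuous_const.sub (continuous_subtype_val.comp hφc)⟩ with hg
  have hgC : ∀ n, ∀ x ∈ C n, g x = 0 := by
    intro n x hx
    have hxc : x ∈ closure (⋃ n, C n) := subset_closure (Set.mem_iUnion.2 ⟨n, hx⟩)
    have : φ x = 1 := hφ1 hxc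
    simp [hg, this]
  have hgmem : g ∈ ⋂ n, Gs n := Set.mem_iInter.2 fun n => hCmem n g (hgC n)
  have hgz : g = 0 := hGsub hgmem
  have : g x₀ = 1 := by simp [hg, hφ0]
  rw [hgz] at this
  simp at this
end

section
/- For a Tychonoff space X, the space C_kh(X) is submetrizable if and only if X is almost σ-compact. -/
open Set TopologicalSpace Filter

/-
Restricting to the compact pieces `Kₙ` of a dense σ-compact set embeds `C(X, ℝ)` continuously and
injectively into the metrizable space `∏ₙ C(Kₙ, ℝ)`, already for the compact-open topology.
Conversely, a submetrizable topology has `Gδ` points. Every `kh`-neighbourhood of `0` contains all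
functions vanishing on some compact set `D` (subbasic sets `[K, V]` and `[U, r]⁻` containing `0`
only constrain `f` on `K`, resp. at one point), so writing `{0} = ⋂ₙ Wₙ` gives compact `Dₙ` such
that every function vanishing on `⋃ₙ Dₙ` is `0`. By complete regularity `⋃ₙ Dₙ` must be dense.
-/

open Topology

section Submetrizable

variable {α : Type*}

lemma Submetrizable.mono {t₁ t₂ : TopologicalSpace α} (h : t₁ ≤ t₂)
    (h₂ : @Submetrizable α t₂) : @Submetrizable α t₁ :=
  let ⟨t', ht', h₂'⟩ := h₂
  ⟨t', ht', h.trans h₂'⟩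

lemma Submetrizable.of_continuous_injective [TopologicalSpace α] {β : Type*} [TopologicalSpace β]
    [MetrizableSpace β] {f : α → β} (hf : Continuous f) (hinj : Function.Injective f) :
    Submetrizable α := by
  let t' : TopologicalSpace α := induced f inferInstance
  exact ⟨t', IsEmbedding.metrizableSpace (f := f) ⟨⟨rfl⟩, hinj⟩,
    continuous_iff_le_induced.mp hf⟩

lemma Submetrizable.isGδ_singleton [TopologicalSpace α] (h : Submetrizable α) (a : α) :
    IsGδ {a} := by
  obtain ⟨t', ht', hle⟩ := h
  obtain ⟨T, hT, hTc, hTa⟩ := @IsGδ.singleton α t' _ _ a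
  exact ⟨T, fun s hs => (hT s hs).mono hle, hTc, hTa⟩

end Submetrizable

lemma submetrizable_continuousMap_of_almostSigmaCompact {X Y : Type*} [TopologicalSpace X]
    [MetricSpace Y] (h : AlmostSigmaCompact X) : Submetrizable C(X, Y) := by
  obtain ⟨K, hK, hdense⟩ := h
  have : ∀ n, CompactSpace (K n) := fun n => isCompact_iff_compactSpace.mp (hK n)
  refine Submetrizable.of_continuous_injective (f := fun f n => f.restrict (K n))
    (continuous_pi fun n => ContinuousMap.continuous_restrict (K n)) fun f g hfg => ?_
  refine ContinuousMap.coe_injective <| Continuous.ext_on hdense f.continuous g.continuous ?_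
  rintro x ⟨-, ⟨n, rfl⟩, hx⟩
  exact DFunLike.congr_fun (congrFun hfg n) ⟨x, hx⟩

section BiCompactOpen

variable {X : Type*} [TopologicalSpace X]

lemma exists_isCompact_eqOn_zero_subset {W : Set C(X, ℝ)}
    (hW : IsOpen[biCompactOpenTop X] W) (h0 : 0 ∈ W) :
    ∃ D, IsCompact D ∧ {f : C(X, ℝ) | EqOn f 0 D} ⊆ W := by
  have hle : (⨅ D ∈ {D : Set X | IsCompact D}, 𝓟 {f : C(X, ℝ) | EqOn f 0 D}) ≤
      @nhds _ (biCompactOpenTop X) 0 := by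
    rw [biCompactOpenTop, ContinuousMap.compactOpen_eq, openPointTop, ← generateFrom_union,
      nhds_generateFrom]
    refine le_iInf₂ fun s ⟨hs0, hs⟩ => ?_
    rcases hs with ⟨K, hK, V, -, rfl⟩ | ⟨U, r, -, rfl⟩
    · refine (iInf₂_le K hK).trans <| principal_mono.2 fun f hf x hx => ?_
      rw [hf hx]
      exact hs0 hx
    · obtain ⟨x, hxU, hx⟩ := hs0
      refine (iInf₂_le {x} isCompact_singleton).trans <| principal_mono.2 fun f hf => ⟨x, hxU, ?_⟩
      rw [hf rfl]
      exact hx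
  have hdir : DirectedOn ((fun D => 𝓟 {f : C(X, ℝ) | EqOn f 0 D}) ⁻¹'o (· ≥ ·))
      {D : Set X | IsCompact D} := fun D₁ h₁ D₂ h₂ =>
    ⟨D₁ ∪ D₂, h₁.union h₂, principal_mono.2 fun _ hf => hf.mono subset_union_left,
      principal_mono.2 fun _ hf => hf.mono subset_union_right⟩
  simpa using (mem_biInf_of_directed hdir ⟨∅, isCompact_empty⟩).1
    (hle (@IsOpen.mem_nhds _ (biCompactOpenTop X) _ _ hW h0))

lemma almostSigmaCompact_of_submetrizable_biCompactOpen [CompletelyRegularSpace X]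
    (h : @Submetrizable C(X, ℝ) (biCompactOpenTop X)) : AlmostSigmaCompact X := by
  obtain ⟨W, hW, hW0⟩ := (@isGδ_iff_eq_iInter_nat _ (biCompactOpenTop X) _).1
    (@Submetrizable.isGδ_singleton _ (biCompactOpenTop X) h 0)
  have h0W : ∀ n, (0 : C(X, ℝ)) ∈ W n := fun n => mem_iInter.1 (hW0 ▸ mem_singleton _) n
  choose D hD hDW using fun n => exists_isCompact_eqOn_zero_subset (hW n) (h0W n)
  refine ⟨D, hD, dense_iff_closure_eq.2 <| eq_univ_of_forall fun p => ?_⟩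
  by_contra hp
  obtain ⟨φ, hφ, hφp, hφ1⟩ := CompletelyRegularSpace.completely_regular p _ isClosed_closure hp
  let g : C(X, ℝ) := ⟨fun x => 1 - φ x, continuous_const.sub (continuous_subtype_val.comp hφ)⟩
  have hg : g ∈ ⋂ n, W n := mem_iInter.2 fun n => hDW n fun x hx => by
    simp [g, hφ1 (subset_closure (mem_iUnion_of_mem n hx))]
  rw [← hW0, mem_singleton_iff] at hg
  simpa [g, hφp] using DFunLike.congr_fun hg p

end BiCompactOpen

theorem stmt12_general {X : Type*} [TopologicalSpace X] [CompletelyRegularSpace X] :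
    @Submetrizable C(X, ℝ) (biCompactOpenTop X) ↔ AlmostSigmaCompact X :=
  ⟨almostSigmaCompact_of_submetrizable_biCompactOpen, fun h =>
    (submetrizable_continuousMap_of_almostSigmaCompact h).mono inf_le_left⟩

theorem stmt12 {X : Type*} [TopologicalSpace X] [T2Space X] [CompletelyRegularSpace X] :
    @Submetrizable C(X, ℝ) (biCompactOpenTop X) ↔ AlmostSigmaCompact X :=
  stmt12_general
end

section
/- If C_kh(X) has a countable neighborhood base at the constant zero function, then X is hemicompact. -/
open Set TopologicalSpace Filter

/-!
Every `kh`-neighbourhood of `0` contains all functions vanishing on some compact set `K`: a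
subbasic compact-open set `{f | MapsTo f K U}` around `0` contains them, and a subbasic
open-point set around `0` is `[U, 0]⁻` with `U` nonempty, which contains the functions vanishing
at any one point of `U`. Choosing such a `Kₙ` for each member `Bₙ` of a countable base at `0`,
a compact set `A` lies in some `closure Kₙ`: the neighbourhood `{f | |f| < 1 on A}` contains
some `Bₙ`, and a point of `A \ closure Kₙ` would carry a function vanishing on `Kₙ` and equal
to `1` at that point.
-/

def vanishingOnCompacts (X : Type*) [TopologicalSpace X] : Filter C(X, ℝ) :=
  ⨅ K ∈ {K : Set X | IsCompact K}, 𝓟 {f | EqOn f 0 K}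

section

variable {X : Type*} [TopologicalSpace X]

theorem hasBasis_vanishingOnCompacts :
    (vanishingOnCompacts X).HasBasis IsCompact fun K => {f : C(X, ℝ) | EqOn f 0 K} :=
  hasBasis_biInf_principal
    (fun K hK L hL => ⟨K ∪ L, hK.union hL, fun _ hf => hf.mono subset_union_left,
      fun _ hf => hf.mono subset_union_right⟩)
    ⟨∅, isCompact_empty⟩

theorem vanishingOnCompacts_le_nhds_compactOpen :
    vanishingOnCompacts X ≤ @nhds C(X, ℝ) ContinuousMap.compactOpen 0 := by
  refine tendsto_nhds_generateFrom_iff.2 ?_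
  rintro _ ⟨K, hK, U, -, rfl⟩ h0
  refine mem_of_superset (hasBasis_vanishingOnCompacts.mem_of_mem hK) fun f hf x hx => ?_
  rw [hf hx]
  exact h0 hx

theorem vanishingOnCompacts_le_nhds_openPointTop :
    vanishingOnCompacts X ≤ @nhds C(X, ℝ) (openPointTop X) 0 := by
  refine tendsto_nhds_generateFrom_iff.2 ?_
  rintro _ ⟨U, r, -, rfl⟩ ⟨x, hxU, hx⟩
  exact mem_of_superset (hasBasis_vanishingOnCompacts.mem_of_mem (isCompact_singleton (x := x)))
    fun f hf => ⟨x, hxU, (hf rfl).trans hx⟩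

theorem vanishingOnCompacts_le_nhds_biCompactOpen :
    vanishingOnCompacts X ≤ @nhds C(X, ℝ) (biCompactOpenTop X) 0 := by
  rw [biCompactOpenTop, nhds_inf]
  exact le_inf vanishingOnCompacts_le_nhds_compactOpen vanishingOnCompacts_le_nhds_openPointTop

theorem subset_closure_of_eqOn_zero_subset_mapsTo_ball [CompletelyRegularSpace X] {A K : Set X}
    (h : {f : C(X, ℝ) | EqOn f 0 K} ⊆ {f | MapsTo f A (Metric.ball 0 1)}) :
    A ⊆ closure K := by
  intro x hxA
  by_contra hxK
  obtain ⟨g, hg, hgx, hgK⟩ :=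
    CompletelyRegularSpace.completely_regular x _ isClosed_closure hxK
  let f : C(X, ℝ) := ⟨fun y => 1 - g y, continuous_const.sub (continuous_subtype_val.comp hg)⟩
  have hfK : EqOn f 0 K := fun y hy => by
    simp [f, hgK (subset_closure hy)]
  have hfx : f x = 1 := by simp [f, hgx]
  simpa [hfx] using h hfK hxA

end

theorem stmt13_general {X : Type*} [TopologicalSpace X] [CompletelyRegularSpace X]
    (h : (@nhds C(X, ℝ) (biCompactOpenTop X) 0).IsCountablyGenerated) :
    Hemicompact X := by
  obtain ⟨B, hB⟩ := (@nhds C(X, ℝ) (biCompactOpenTop X) 0).exists_antitone_basis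
  choose K hK hKB using fun n =>
    hasBasis_vanishingOnCompacts.mem_iff.1 (vanishingOnCompacts_le_nhds_biCompactOpen (hB.mem n))
  refine ⟨fun n => closure (K n), fun n => (hK n).closure, fun A hA => ?_⟩
  have hA_nhds : {f : C(X, ℝ) | MapsTo f A (Metric.ball 0 1)} ∈
      @nhds C(X, ℝ) (biCompactOpenTop X) 0 :=
    @IsOpen.mem_nhds _ (biCompactOpenTop X) _ _
      ((ContinuousMap.isOpen_setOfPred_mapsTo hA Metric.isOpen_ball).mono inf_le_left)
      fun _ _ => Metric.mem_ball_self one_pos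
  obtain ⟨n, -, hn⟩ := hB.1.mem_iff.1 hA_nhds
  exact ⟨n, subset_closure_of_eqOn_zero_subset_mapsTo_ball ((hKB n).trans hn)⟩

theorem stmt13 {X : Type*} [TopologicalSpace X] [T2Space X] [CompletelyRegularSpace X]
    (h : (@nhds C(X, ℝ) (biCompactOpenTop X) 0).IsCountablyGenerated) :
    Hemicompact X :=
  stmt13_general h
end

section
/- If X is a hemicompact metric space, then the constant zero function has a countable neighborhood base in C_kh(X). -/
open Set TopologicalSpace Filter

/-- If the neighborhood filter of `a` in `generateFrom g` has a countable cofinal family of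
subbasic sets, it is countably generated. -/
lemma aux_countably_generated {α : Type*} (g : Set (Set α)) (a : α) (T : Set (Set α))
    (hTc : T.Countable) (hT : ∀ t ∈ T, a ∈ t ∧ t ∈ g)
    (hcof : ∀ t ∈ g, a ∈ t → ∃ u ∈ T, u ⊆ t) :
    (@nhds α (generateFrom g) a).IsCountablyGenerated := by
  have h : @nhds α (generateFrom g) a = ⨅ t ∈ T, 𝓟 t := by
    rw [nhds_generateFrom]
    apply le_antisymm
    · exact le_iInf₂ fun t ht => iInf₂_le t ⟨(hT t ht).1, (hT t ht).2⟩
    · refine le_iInf₂ fun t ht => ?_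
      obtain ⟨u, huT, hut⟩ := hcof t ht.2 ht.1
      exact le_trans (iInf₂_le u huT) (principal_mono.2 hut)
  rw [h, iInf_subtype']
  have := hTc.to_subtype
  exact Filter.iInf.isCountablyGenerated _

theorem stmt14 {X : Type*} [MetricSpace X] (hX : Hemicompact X) :
    (@nhds C(X, ℝ) (biCompactOpenTop X) 0).IsCountablyGenerated := by
  obtain ⟨K, hKc, hKcof⟩ := hX
  -- `X` is σ-compact, hence second countable
  haveI : SigmaCompactSpace X := by
    refine ⟨fun n => K n, hKc, ?_⟩
    refine Set.eq_univ_of_forall fun x => Set.mem_iUnion.2 ?_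
    obtain ⟨n, hn⟩ := hKcof {x} isCompact_singleton
    exact ⟨n, hn rfl⟩
  haveI : SecondCountableTopology X := EMetric.secondCountable_of_sigmaCompact X
  obtain ⟨b, hbc, hbne, hb⟩ := TopologicalSpace.exists_countable_basis X
  -- the open-point part
  have h1 : (@nhds C(X, ℝ) (openPointTop X) 0).IsCountablyGenerated := by
    refine aux_countably_generated _ 0
      ((fun B => {f : C(X, ℝ) | ∃ x ∈ B, f x = 0}) '' b) (hbc.image _) ?_ ?_
    · rintro t ⟨B, hB, rfl⟩
      obtain ⟨x, hx⟩ := Set.nonempty_iff_ne_empty.2 (fun h => hbne (h ▸ hB))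
      exact ⟨⟨x, hx, rfl⟩, ⟨B, 0, hb.isOpen hB, rfl⟩⟩
    · rintro t ⟨U, r, hU, rfl⟩ ⟨x, hxU, hx0⟩
      obtain ⟨B, hBb, hxB, hBU⟩ := hb.exists_subset_of_mem_open hxU hU
      refine ⟨_, ⟨B, hBb, rfl⟩, ?_⟩
      rintro f ⟨y, hyB, hfy⟩
      exact ⟨y, hBU hyB, by rw [hfy, ← hx0]; rfl⟩
  -- the compact-open part
  have h2 : (@nhds C(X, ℝ) ContinuousMap.compactOpen 0).IsCountablyGenerated := by
    rw [ContinuousMap.compactOpen_eq]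
    refine aux_countably_generated _ 0
      ((fun p : ℕ × ℕ =>
        {f : C(X, ℝ) | Set.MapsTo f (K p.1) (Metric.ball 0 (1 / (p.2 + 1)))}) '' Set.univ)
      ((Set.countable_univ).image _) ?_ ?_
    · rintro t ⟨⟨n, m⟩, -, rfl⟩
      constructor
      · intro x _
        simp [Metric.mem_ball]
        positivity
      · exact Set.mem_image2_of_mem (hKc n) (Metric.isOpen_ball : IsOpen (Metric.ball (0:ℝ) (1 / ((m:ℝ) + 1))))
    · rintro t ht h0t
      obtain ⟨A, hA, U, hU, rfl⟩ := ht
      simp only [Set.mem_setOf_eq] at hA hU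
      rcases A.eq_empty_or_nonempty with rfl | ⟨x, hx⟩
      · refine ⟨_, ⟨(0, 0), Set.mem_univ _, rfl⟩, fun f _ => ?_⟩
        exact Set.mapsTo_empty _ _
      · have h0U : (0 : ℝ) ∈ U := h0t hx
        obtain ⟨ε, hε, hball⟩ := Metric.isOpen_iff.1 hU 0 h0U
        obtain ⟨m, hm⟩ := exists_nat_one_div_lt hε
        obtain ⟨n, hn⟩ := hKcof A hA
        refine ⟨_, ⟨(n, m), Set.mem_univ _, rfl⟩, fun f hf y hy => ?_⟩
        refine hball ?_
        have := hf (hn hy)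
        rw [Metric.mem_ball] at this ⊢
        calc dist (f y) 0 < 1 / (m + 1) := this
          _ < ε := by exact_mod_cast hm
  -- combine
  rw [show biCompactOpenTop X = ContinuousMap.compactOpen ⊓ openPointTop X from rfl, _root_.nhds_inf]
  exact Filter.Inf.isCountablyGenerated _ _
end

section
/- If a Tychonoff space X has a countable π-base consisting of connected sets each containing at least two points, then X is R-separable. -/
open Set TopologicalSpace Filter

private lemma connected_nontrivial_isRSet {X : Type*} [TopologicalSpace X] [T2Space X]
    [CompletelyRegularSpace X] (B : Set X) (hc : IsConnected B) (hnt : B.Nontrivial) :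
    IsRSet B := by
  obtain ⟨x, hx, y, hy, hxy⟩ := hnt
  obtain ⟨f, hf, hf0, hf1⟩ := CompletelyRegularSpace.completely_regular x {y}
    isClosed_singleton (by simpa using hxy)
  let g : C(X, ℝ) := ⟨fun z => (f z : ℝ), continuous_subtype_val.comp hf⟩
  have hgx : g x = 0 := by simp [g, hf0]
  have hgy : g y = 1 := by
    have h1 : f y = 1 := hf1 rfl
    simp [g, h1]
  have hIcc : Icc (0:ℝ) 1 ⊆ g '' B := by
    have hc' : IsConnected (g '' B) := hc.image g g.continuous.continuousOn
    exact hc'.isPreconnected.Icc_subset ⟨x, hx, hgx⟩ ⟨y, hy, hgy⟩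
  refine ⟨⟨x, hx⟩, fun m => (((Denumerable.eqv ℤ).symm m : ℤ) : ℝ) • g, ?_⟩
  apply eq_univ_of_forall
  intro r
  obtain ⟨a, ha0, har1, har2⟩ : ∃ a : ℤ, (a:ℝ) ≠ 0 ∧ 0 ≤ r / a ∧ r / a ≤ 1 := by
    rcases le_or_gt 0 r with h | h
    · refine ⟨⌈r⌉ + 1, ?_, ?_, ?_⟩
      · have : (0:ℝ) < (⌈r⌉ : ℝ) + 1 := by
          have := Int.le_ceil r; linarith
        push_cast; linarith
      · apply div_nonneg h
        have := Int.le_ceil r; push_cast; linarith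
      · have hpos : (0:ℝ) < ((⌈r⌉ + 1 : ℤ) : ℝ) := by
          have := Int.le_ceil r; push_cast; linarith
        rw [div_le_one hpos]
        have := Int.le_ceil r; push_cast; linarith
    · refine ⟨⌊r⌋ - 1, ?_, ?_, ?_⟩
      · have : ((⌊r⌋ - 1 : ℤ) : ℝ) < 0 := by
          have := Int.floor_le r; push_cast; linarith
        linarith
      · rw [show r / ((⌊r⌋ - 1 : ℤ) : ℝ) = (-r) / (-((⌊r⌋ - 1 : ℤ) : ℝ)) from
          (neg_div_neg_eq _ _).symm]
        apply div_nonneg (by linarith)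
        have := Int.floor_le r; push_cast; linarith
      · rw [show r / ((⌊r⌋ - 1 : ℤ) : ℝ) = (-r) / (-((⌊r⌋ - 1 : ℤ) : ℝ)) from
          (neg_div_neg_eq _ _).symm]
        have hpos : (0:ℝ) < -((⌊r⌋ - 1 : ℤ) : ℝ) := by
          have := Int.floor_le r; push_cast; linarith
        rw [div_le_one hpos]
        have := Int.floor_le r; push_cast; linarith
  obtain ⟨z, hz, hgz⟩ := hIcc ⟨har1, har2⟩
  refine mem_iUnion.2 ⟨(Denumerable.eqv ℤ) a, ⟨z, hz, ?_⟩⟩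
  simp only [Equiv.symm_apply_apply, ContinuousMap.smul_apply, smul_eq_mul]
  rw [hgz]
  field_simp

theorem stmt16 {X : Type*} [TopologicalSpace X] [T2Space X] [CompletelyRegularSpace X] (P : ℕ → Set X)
    (hopen : ∀ n, IsOpen (P n)) (hconn : ∀ n, IsConnected (P n))
    (hnt : ∀ n, (P n).Nontrivial)
    (hpi : ∀ U : Set X, IsOpen U → U.Nonempty → ∃ n, P n ⊆ U) :
    RSeparable X :=
  ⟨P, fun n => connected_nontrivial_isRSet (P n) (hconn n) (hnt n), hpi⟩
end

section
/- For any Tychonoff space X, the space C_kh(X) with the bi-compact-open topology is not Lindelöf. -/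
open Set TopologicalSpace Filter

theorem stmt19 {X : Type*} [TopologicalSpace X] [T2Space X] [CompletelyRegularSpace X] [Nonempty X] :
    ¬ @LindelofSpace C(X, ℝ) (biCompactOpenTop X) := by
  intro hL
  set U : Option ℝ → Set C(X, ℝ) := fun o => match o with
    | none => {f | ∃ x y, f x ≠ f y}
    | some r => {f | ∃ x ∈ (univ : Set X), f x = r} with hU
  have hUopen : ∀ o, @IsOpen _ (biCompactOpenTop X) (U o) := by
    rintro (_ | r)
    · have h1 : IsOpen {f : C(X, ℝ) | ∃ x y, f x ≠ f y} := by
        have he : {f : C(X, ℝ) | ∃ x y, f x ≠ f y} =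
            ⋃ (x : X) (y : X), {f : C(X, ℝ) | f x ≠ f y} := by
          ext f; simp
        rw [he]
        exact isOpen_iUnion fun x => isOpen_iUnion fun y =>
          isOpen_ne_fun (continuous_eval_const x)
            (continuous_eval_const y)
      exact h1.mono inf_le_left
    · have h2 : @IsOpen _ (openPointTop X) {f : C(X, ℝ) | ∃ x ∈ (univ : Set X), f x = r} :=
        isOpen_generateFrom_of_mem ⟨univ, r, isOpen_univ, rfl⟩
      exact h2.mono inf_le_right
  have hcov : (univ : Set C(X, ℝ)) ⊆ ⋃ o, U o := by
    intro f _
    by_cases hc : ∃ x y, f x ≠ f y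
    · exact mem_iUnion.2 ⟨none, hc⟩
    · push_neg at hc
      exact mem_iUnion.2 ⟨some (f (Classical.arbitrary X)),
        ⟨Classical.arbitrary X, mem_univ _, rfl⟩⟩
  obtain ⟨T, hTc, hTsub⟩ :=
    @IsLindelof.elim_countable_subcover C(X, ℝ) (biCompactOpenTop X) univ (Option ℝ)
      (@isLindelof_univ C(X, ℝ) (biCompactOpenTop X) hL) U hUopen hcov
  have hR : {r : ℝ | some r ∈ T}.Countable :=
    hTc.preimage (Option.some_injective ℝ)
  obtain ⟨s, hs⟩ : ∃ s : ℝ, s ∉ {r : ℝ | some r ∈ T} := by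
    by_contra h
    push_neg at h
    exact Cardinal.not_countable_real (by simpa [eq_univ_iff_forall.2 h] using hR)
  have hmem := hTsub (mem_univ (ContinuousMap.const X s))
  rw [mem_iUnion₂] at hmem
  obtain ⟨o, hoT, hmem⟩ := hmem
  match o with
  | none =>
    obtain ⟨x, y, hxy⟩ := hmem
    exact hxy rfl
  | some r =>
    obtain ⟨x, -, hx⟩ := hmem
    exact hs (by simpa [← show s = r from hx.symm ▸ rfl] using hoT)
end
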